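/- For every n, q ∈ ℤ⁺ there exists an arena A with n + 3 nodes over a finite set of colors, a node u of A, and a q-state strategy S₁ of Player 0 in A, such that every chromatic Q-state strategy S₂ of Player 0 with col(S₂, u) ⊆ col(S₁, u) satisfies Q ≥ q^n. -/

import Mathlib

/-!
Player 1 picks a track `i` (an edge `u → v i` of colour `⋆`), broadcasts a word `w : Fin n → Fin q`
as the colours `(j, w j)` of self-loops at `v i`, and then reveals `i` by the edge `query i` into
the Player-0 node `t`, where Player 0 answers with an edge of colour `answer a`. A `q`-state memory
that reads edges knows the track and stores only `w i`; this strategy answers `w i`.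

A chromatic strategy `S₂` with `col(S₂, u) ⊆ col(S₁, u)` must answer `w i` too: edges are
determined by their target and colour, so a play of `S₁` with the same colours as the play of `S₂`
coincides with it up to the query, and there `S₁` answers `w i`. The colours seen before the query
do not depend on `i`, so the memory state of `S₂` after the broadcast determines every `w i`, i.e.
all of `w`; hence `S₂` has at least `q ^ n` states.
-/

/-- An arena over a set of colors `C`. -/
structure Arena (C : Type) where
  V : Type
  E : Type
  finV : Fintype V
  finE : Fintype E
  /-- `isP0 v` means node `v` is controlled by Player 0. -/
  isP0 : V → Prop
  source : E → V
  target : E → V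
  col : E → C
  out : ∀ v : V, ∃ e : E, source e = v

namespace Arena

variable {C : Type} (A : Arena C)

/-- `PathFrom v es w` : the edge list `es` forms a finite path from `v` to `w`. -/
def PathFrom : A.V → List A.E → A.V → Prop
  | v, [], w => v = w
  | v, e :: es, w => A.source e = v ∧ PathFrom (A.target e) es w

/-- The endpoint of the edge list `es` started at `v`. -/
def ptarget (v : A.V) (es : List A.E) : A.V := es.foldl (fun _ e => A.target e) v

/-- A strategy of Player 0: given the starting node and the finite play so far,
it outputs the next edge. -/
def Strategy (A : Arena C) : Type := A.V → List A.E → A.E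

/-- A legal strategy moves along an edge leaving the current node. -/
def IsStrategy (S : A.Strategy) : Prop :=
  ∀ v es, A.source (S v es) = A.ptarget v es

/-- The finite edge list `es`, viewed as a play from `v`, is consistent with `S`:
at every prefix ending in a Player-0 node, the next edge is the one chosen by `S`. -/
def ConsFrom (S : A.Strategy) (v : A.V) (es : List A.E) : Prop :=
  ∀ p e r, es = p ++ e :: r → A.isP0 (A.ptarget v p) → e = S v p

/-- `P` is an infinite path starting at `v`. -/
def InfPlay (v : A.V) (P : ℕ → A.E) : Prop :=
  A.source (P 0) = v ∧ ∀ i, A.target (P i) = A.source (P (i + 1))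

/-- The length-`k` prefix of an infinite play, as a list. -/
def prefixList (P : ℕ → A.E) (k : ℕ) : List A.E := List.ofFn (fun i : Fin k => P i)

/-- `colSet S v` is the set of color sequences of infinite plays from `v` consistent with `S`. -/
def colSet (S : A.Strategy) (v : A.V) : Set (ℕ → C) :=
  { γ | ∃ P : ℕ → A.E, A.InfPlay v P ∧ (∀ k, A.ConsFrom S v (A.prefixList P k)) ∧
      γ = fun i => A.col (P i) }

/-- `colSetU S U = ⋃ v ∈ U, colSet S v`. -/
def colSetU (S : A.Strategy) (U : Set A.V) : Set (ℕ → C) := ⋃ v ∈ U, A.colSet S v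

/-- State of a memory structure after reading a list of edges. -/
def mstate {M : Type} (δ : M → A.E → M) (m0 : M) (es : List A.E) : M := es.foldl δ m0

/-- `S` is implemented by the memory structure `(M, m0, δ)`: its moves depend only
on the current node and the current memory state. -/
def HasMemory (S : A.Strategy) (M : Type) (m0 : M) (δ : M → A.E → M) : Prop :=
  ∀ v1 es1 v2 es2, A.ptarget v1 es1 = A.ptarget v2 es2 →
    A.mstate δ m0 es1 = A.mstate δ m0 es2 → S v1 es1 = S v2 es2

/-- A memory structure is chromatic if transitions depend only on colors of edges. -/
def ChromaticMem (M : Type) (δ : M → A.E → M) : Prop :=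
  ∃ σ : M → C → M, ∀ m e, δ m e = σ m (A.col e)

/-- `S` is a `q`-state strategy. -/
def IsQState (S : A.Strategy) (q : ℕ) : Prop :=
  ∃ (M : Type) (_ : Fintype M) (m0 : M) (δ : M → A.E → M),
    Fintype.card M = q ∧ A.HasMemory S M m0 δ

/-- `S` is a chromatic `q`-state strategy. -/
def IsChromaticQState (S : A.Strategy) (q : ℕ) : Prop :=
  ∃ (M : Type) (_ : Fintype M) (m0 : M) (δ : M → A.E → M),
    Fintype.card M = q ∧ A.ChromaticMem M δ ∧ A.HasMemory S M m0 δ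

end Arena

attribute [instance] Arena.finV Arena.finE

open Arena

theorem List.foldl_ite_eq {α β : Type*} [DecidableEq α] (g : α → β) (i : α) (l : List α)
    (m : β) : l.foldl (fun m j => if j = i then g j else m) m = if i ∈ l then g i else m := by
  induction l generalizing m with
  | nil => simp
  | cons j l ih =>
    rw [List.foldl_cons, ih]
    by_cases hi : i ∈ l
    · simp [hi]
    · by_cases hj : j = i
      · simp [hj]
      · simp [hi, hj, Ne.symm hj]

namespace Arena

variable {C : Type} {A : Arena C}

theorem pathFrom_append {v w x : A.V} {l₁ l₂ : List A.E} (h₁ : A.PathFrom v l₁ w)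
    (h₂ : A.PathFrom w l₂ x) : A.PathFrom v (l₁ ++ l₂) x := by
  induction l₁ generalizing v with
  | nil => exact (show v = w from h₁) ▸ h₂
  | cons e l ih => exact ⟨h₁.1, ih h₁.2⟩

theorem pathFrom_of_forall_loop {x : A.V} {l : List A.E}
    (h : ∀ e ∈ l, A.source e = x ∧ A.target e = x) : A.PathFrom x l x := by
  induction l with
  | nil => rfl
  | cons e l ih =>
    obtain ⟨hs, ht⟩ := h e List.mem_cons_self
    exact ⟨hs, ht ▸ ih fun e' he' => h e' (List.mem_cons_of_mem e he')⟩

theorem PathFrom.ptarget_eq {v w : A.V} {l : List A.E} (h : A.PathFrom v l w) :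
    A.ptarget v l = w := by
  induction l generalizing v with
  | nil => exact h
  | cons e l ih => exact ih h.2

theorem ptarget_append_singleton (v : A.V) (l : List A.E) (e : A.E) :
    A.ptarget v (l ++ [e]) = A.target e := by
  simp [ptarget]

theorem prefixList_succ (P : ℕ → A.E) (k : ℕ) :
    A.prefixList P (k + 1) = A.prefixList P k ++ [P k] := by
  simp only [prefixList, List.ofFn_succ', List.concat_eq_append, Fin.val_castSucc, Fin.val_last]

theorem length_prefixList (P : ℕ → A.E) (k : ℕ) : (A.prefixList P k).length = k :=
  List.length_ofFn

theorem getElem_prefixList (P : ℕ → A.E) {j k : ℕ} (h : j < (A.prefixList P k).length) :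
    (A.prefixList P k)[j] = P j := by
  simp [prefixList]

theorem prefixList_take (P : ℕ → A.E) {j k : ℕ} (h : j ≤ k) :
    (A.prefixList P k).take j = A.prefixList P j :=
  List.ext_getElem (by simp [prefixList]; omega) fun _ _ _ => by simp [prefixList]

theorem prefixList_getD (L : List A.E) (d : A.E) {k : ℕ} (hk : k ≤ L.length) :
    A.prefixList (fun j => L.getD j d) k = L.take k :=
  List.ext_getElem (by simp [prefixList]; omega) fun j h _ => by
    simp only [prefixList, List.length_ofFn] at h
    simp [prefixList, show j < L.length by omega]

theorem InfPlay.ptarget_prefixList {v : A.V} {P : ℕ → A.E} (hP : A.InfPlay v P) (k : ℕ) :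
    A.ptarget v (A.prefixList P k) = A.source (P k) := by
  cases k with
  | zero => exact hP.1.symm
  | succ k => rw [prefixList_succ, ptarget_append_singleton, hP.2]

theorem infPlay_getD {v : A.V} {L : List A.E} {d : A.E} (hL : A.PathFrom v L (A.source d))
    (hd : A.target d = A.source d) : A.InfPlay v (fun k => L.getD k d) := by
  induction L generalizing v with
  | nil => exact ⟨(show v = A.source d from hL).symm, fun _ => by simpa using hd⟩
  | cons e L ih =>
    obtain ⟨h0, hstep⟩ := ih hL.2
    refine ⟨hL.1, fun k => ?_⟩
    cases k with
    | zero => simpa using h0.symm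
    | succ k => simpa using hstep k

theorem InfPlay.eq_of_col_eq (hinj : Function.Injective fun e => (A.target e, A.col e))
    {v v' : A.V} {P P' : ℕ → A.E} (hP : A.InfPlay v P) (hP' : A.InfPlay v' P')
    (hcol : ∀ k, A.col (P k) = A.col (P' k)) {m : ℕ} (hm : P m = P' m) {k : ℕ} (hk : k ≤ m) :
    P k = P' k := by
  induction hk using Nat.decreasingInduction with
  | self => exact hm
  | of_succ k _ ih => exact hinj (Prod.ext (by simp only [hP.2, hP'.2, ih]) (hcol k))

theorem consFrom_iff_getElem {S : A.Strategy} {v : A.V} {l : List A.E} :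
    A.ConsFrom S v l ↔
      ∀ j (hj : j < l.length), A.isP0 (A.ptarget v (l.take j)) → l[j] = S v (l.take j) := by
  constructor
  · intro h j hj
    exact h _ _ (l.drop (j + 1)) (by rw [← List.drop_eq_getElem_cons hj, List.take_append_drop])
  · rintro h p e r rfl hp
    simpa using h p.length (by simp) (by simpa using hp)

theorem forall_consFrom_prefixList_iff {S : A.Strategy} {v : A.V} {P : ℕ → A.E} :
    (∀ k, A.ConsFrom S v (A.prefixList P k)) ↔
      ∀ k, A.isP0 (A.ptarget v (A.prefixList P k)) → P k = S v (A.prefixList P k) := by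
  simp only [consFrom_iff_getElem]
  constructor
  · intro h k
    have := h (k + 1) k (by simp [length_prefixList])
    rwa [prefixList_take P k.le_succ, getElem_prefixList] at this
  · intro h k j hj
    have hjk : j < k := by simpa [length_prefixList] using hj
    rw [prefixList_take P hjk.le, getElem_prefixList]
    exact h j

theorem mstate_eq_foldl_map_col {M : Type} {δ : M → A.E → M} {σ : M → C → M}
    (hσ : ∀ m e, δ m e = σ m (A.col e)) (m0 : M) (l : List A.E) :
    A.mstate δ m0 l = (l.map A.col).foldl σ m0 := by
  rw [mstate, List.foldl_map, show δ = _ from funext₂ hσ]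

theorem IsChromaticQState.card_le {S : A.Strategy} {Q : ℕ} (hS : A.IsChromaticQState S Q)
    {W I : Type} [Fintype W] {v : A.V} (hist : W → I → List A.E) (pre : W → List C)
    (post : I → List C) (hcol : ∀ w i, (hist w i).map A.col = pre w ++ post i)
    (htarget : ∀ w w' i, A.ptarget v (hist w i) = A.ptarget v (hist w' i))
    (hsep : ∀ w w', (∀ i, S v (hist w i) = S v (hist w' i)) → w = w') :
    Fintype.card W ≤ Q := by
  obtain ⟨M, _, m0, δ, rfl, ⟨σ, hσ⟩, hmem⟩ := hS
  refine Fintype.card_le_of_injective (fun w => (pre w).foldl σ m0) fun w w' h =>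
    hsep w w' fun i => hmem _ _ _ _ (htarget w w' i) ?_
  simp only [mstate_eq_foldl_map_col hσ, hcol, List.foldl_append]
  exact congrArg (fun m => (post i).foldl σ m) h

def memoryStrategy {M : Type} (next : A.V → M → A.E) (m0 : M) (δ : M → A.E → M) :
    A.Strategy :=
  fun v l => next (A.ptarget v l) (A.mstate δ m0 l)

theorem isStrategy_memoryStrategy {M : Type} {next : A.V → M → A.E}
    (hnext : ∀ x m, A.source (next x m) = x) (m0 : M) (δ : M → A.E → M) :
    A.IsStrategy (A.memoryStrategy next m0 δ) :=
  fun _ _ => hnext _ _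

theorem isQState_memoryStrategy {M : Type} [Fintype M] (next : A.V → M → A.E) (m0 : M)
    (δ : M → A.E → M) : A.IsQState (A.memoryStrategy next m0 δ) (Fintype.card M) :=
  ⟨M, inferInstance, m0, δ, rfl, fun v₁ l₁ v₂ l₂ ht hm => by
    simp only [memoryStrategy, ht, hm]⟩

end Arena

namespace BroadcastArena

inductive Node (n : ℕ)
  | u
  | v (i : Fin n)
  | t
  | z
  deriving Fintype

inductive Color (n q : ℕ)
  | star
  | bcast (j : Fin n) (a : Fin q)
  | query (i : Fin n)
  | answer (a : Fin q)
  deriving Fintype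

inductive Edge (n q : ℕ)
  | start (i : Fin n)
  | bcast (i j : Fin n) (a : Fin q)
  | query (i : Fin n)
  | answer (a : Fin q)
  | idle
  deriving Fintype

variable {n q : ℕ}

def Edge.source : Edge n q → Node n
  | .start _ => .u
  | .bcast i _ _ => .v i
  | .query i => .v i
  | .answer _ => .t
  | .idle => .z

def Edge.target : Edge n q → Node n
  | .start i => .v i
  | .bcast i _ _ => .v i
  | .query _ => .t
  | .answer _ => .z
  | .idle => .z

def Edge.color : Edge n q → Color n q
  | .start _ => .star
  | .bcast _ j a => .bcast j a
  | .query i => .query i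
  | .answer a => .answer a
  | .idle => .star

theorem card_node (n : ℕ) : Fintype.card (Node n) = n + 3 := by
  rw [Fintype.card_congr (Node.proxyTypeEquiv n).symm]
  simp only [Fintype.card_sum, Fintype.card_unit, Fintype.card_fin]
  omega

theorem Edge.injective_target_color :
    Function.Injective fun e : Edge n q => (e.target, e.color) := by
  rintro (_ | _ | _ | _ | _) (_ | _ | _ | _ | _) h <;>
    simp_all [Edge.target, Edge.color]

theorem Edge.eq_answer_of_source_eq_t {e : Edge n q} (h : e.source = .t) :
    ∃ a, e = .answer a := by
  cases e <;> simp_all [Edge.source]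

theorem Edge.eq_query_of_color_eq {e : Edge n q} {i : Fin n} (h : e.color = .query i) :
    e = .query i := by
  cases e <;> simp_all [Edge.color]

def register (m : Fin q) : Edge n q → Fin q
  | .bcast i j a => if j = i then a else m
  | _ => m

def hist (w : Fin n → Fin q) (i : Fin n) : List (Edge n q) :=
  .start i :: List.ofFn (fun j => .bcast i j (w j)) ++ [.query i]

theorem length_hist (w : Fin n → Fin q) (i : Fin n) : (hist w i).length = n + 2 := by
  simp [hist]

theorem source_ne_t_of_mem_hist {w : Fin n → Fin q} {i : Fin n} {e : Edge n q}
    (he : e ∈ hist w i) : e.source ≠ .t := by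
  simp only [hist, List.cons_append, List.mem_cons, List.mem_append, List.mem_ofFn,
    List.not_mem_nil, or_false] at he
  rcases he with rfl | ⟨j, rfl⟩ | rfl <;> simp [Edge.source]

theorem map_color_hist (w : Fin n → Fin q) (i : Fin n) :
    (hist w i).map Edge.color =
      (.star :: List.ofFn fun j => .bcast j (w j)) ++ [.query i] := by
  simp [hist, List.map_ofFn, Function.comp_def, Edge.color]

theorem foldl_register_hist (w : Fin n → Fin q) (i : Fin n) (m : Fin q) :
    (hist w i).foldl register m = w i := by
  simp only [hist, List.foldl_append, List.foldl_cons, List.foldl_nil, List.ofFn_eq_map,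
    List.foldl_map]
  exact (List.foldl_ite_eq w i (List.finRange n) m).trans (if_pos (List.mem_finRange i))

def play (w : Fin n → Fin q) (i : Fin n) (a : Fin q) : ℕ → Edge n q :=
  fun k => (hist w i ++ [Edge.answer a]).getD k .idle

theorem play_query (w : Fin n → Fin q) (i : Fin n) (a : Fin q) :
    play w i a (n + 1) = .query i := by
  simp [play, hist]

theorem play_answer (w : Fin n → Fin q) (i : Fin n) (a : Fin q) :
    play w i a (n + 2) = .answer a := by
  simp [play, hist]

theorem eq_of_source_play_eq_t {w : Fin n → Fin q} {i : Fin n} {a : Fin q} {k : ℕ}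
    (h : (play w i a k).source = .t) : k = n + 2 := by
  rcases lt_trichotomy k (n + 2) with hk | hk | hk
  · rw [← length_hist w i] at hk
    unfold play at h
    rw [List.getD_append _ _ _ _ hk, List.getD_eq_getElem _ _ hk] at h
    exact absurd h (source_ne_t_of_mem_hist (List.getElem_mem hk))
  · exact hk
  · unfold play at h
    rw [List.getD_eq_default _ _ (by simp [length_hist]; omega)] at h
    cases h

variable (n q) in
abbrev arena [NeZero n] [NeZero q] : Arena (Color n q) where
  V := Node n
  E := Edge n q
  finV := inferInstance
  finE := inferInstance
  isP0 x := x = .t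
  source := Edge.source
  target := Edge.target
  col := Edge.color
  out := by
    rintro (_ | i | _ | _)
    exacts [⟨.start 0, rfl⟩, ⟨.query i, rfl⟩, ⟨.answer 0, rfl⟩, ⟨.idle, rfl⟩]

variable [NeZero n] [NeZero q]

def respond : Node n → Fin q → Edge n q
  | .u, _ => .start 0
  | .v i, _ => .query i
  | .t, m => .answer m
  | .z, _ => .idle

theorem pathFrom_hist (w : Fin n → Fin q) (i : Fin n) :
    (arena n q).PathFrom .u (hist w i) .t := by
  refine pathFrom_append ⟨rfl, pathFrom_of_forall_loop ?_⟩ ⟨rfl, rfl⟩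
  intro e he
  obtain ⟨j, rfl⟩ := List.mem_ofFn.1 he
  exact ⟨rfl, rfl⟩

def strategy₁ : (arena n q).Strategy := (arena n q).memoryStrategy respond 0 register

theorem isStrategy_strategy₁ : (arena n q).IsStrategy strategy₁ :=
  (arena n q).isStrategy_memoryStrategy (by rintro (_ | _ | _ | _) _ <;> rfl) _ _

theorem isQState_strategy₁ : (arena n q).IsQState strategy₁ q := by
  have := (arena n q).isQState_memoryStrategy respond 0 register
  rwa [Fintype.card_fin] at this

theorem strategy₁_hist (w : Fin n → Fin q) (i : Fin n) :
    strategy₁ .u (hist w i) = .answer (w i) := by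
  show respond _ ((hist w i).foldl register 0) = _
  rw [(pathFrom_hist w i).ptarget_eq, foldl_register_hist]
  rfl

theorem infPlay_play (w : Fin n → Fin q) (i : Fin n) (a : Fin q) :
    (arena n q).InfPlay .u (play w i a) :=
  infPlay_getD (pathFrom_append (pathFrom_hist w i) ⟨rfl, rfl⟩) rfl

theorem prefixList_play (w : Fin n → Fin q) (i : Fin n) (a : Fin q) :
    (arena n q).prefixList (play w i a) (n + 2) = hist w i := by
  unfold play
  rw [prefixList_getD _ _ (by simp [length_hist]), List.take_left' (length_hist w i)]

theorem consFrom_play {S : (arena n q).Strategy} {w : Fin n → Fin q} {i : Fin n} {a : Fin q}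
    (ha : S .u (hist w i) = .answer a) (k : ℕ) :
    (arena n q).ConsFrom S .u ((arena n q).prefixList (play w i a) k) := by
  refine forall_consFrom_prefixList_iff.2 (fun k hk => ?_) k
  rw [(infPlay_play w i a).ptarget_prefixList] at hk
  obtain rfl := eq_of_source_play_eq_t hk
  rw [prefixList_play, play_answer, ha]

theorem answer_eq_of_mem_colSet {w : Fin n → Fin q} {i : Fin n} {a : Fin q}
    (h : (fun k => (play w i a k).color) ∈ (arena n q).colSet strategy₁ .u) : a = w i := by
  obtain ⟨P, hP, hcons, hcol⟩ := h
  have hcol' : ∀ k, (play w i a k).color = (P k).color := fun k => congrFun hcol k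
  have hquery : play w i a (n + 1) = P (n + 1) :=
    (play_query w i a).trans (Edge.eq_query_of_color_eq (by rw [← hcol', play_query]; rfl)).symm
  have hprefix : (arena n q).prefixList P (n + 2) = hist w i := by
    rw [← prefixList_play w i a]
    refine congrArg List.ofFn (funext fun j => ?_)
    exact ((infPlay_play w i a).eq_of_col_eq Edge.injective_target_color hP hcol' hquery
      (by omega)).symm
  have hmove := forall_consFrom_prefixList_iff.1 hcons (n + 2)
    (by rw [hprefix, (pathFrom_hist w i).ptarget_eq])
  rw [hprefix, strategy₁_hist] at hmove
  have hanswer := hcol' (n + 2)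
  rw [play_answer, hmove] at hanswer
  exact Color.answer.inj hanswer

theorem eq_answer_of_colSet_subset {S : (arena n q).Strategy} (hS : (arena n q).IsStrategy S)
    (hsub : (arena n q).colSet S .u ⊆ (arena n q).colSet strategy₁ .u)
    (w : Fin n → Fin q) (i : Fin n) : S .u (hist w i) = .answer (w i) := by
  obtain ⟨a, ha⟩ :=
    Edge.eq_answer_of_source_eq_t ((hS .u (hist w i)).trans (pathFrom_hist w i).ptarget_eq)
  rw [ha, answer_eq_of_mem_colSet (hsub ⟨play w i a, infPlay_play w i a, consFrom_play ha, rfl⟩)]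

end BroadcastArena

open BroadcastArena

/-- For every `n, q ≥ 1` there exist an arena with `n + 3` nodes over a finite
set of colors, a node `u`, and a `q`-state strategy `S₁` of Player 0, such that
every chromatic `Q`-state strategy `S₂` of Player 0 with
`col(S₂, u) ⊆ col(S₁, u)` satisfies `Q ≥ q ^ n`. -/
theorem chromatic_lower_bound (n q : ℕ) (hn : 1 ≤ n) (hq : 1 ≤ q) :
    ∃ (C : Type) (_ : Fintype C) (A : Arena C), Fintype.card A.V = n + 3 ∧
      ∃ (u : A.V) (S₁ : A.Strategy), A.IsStrategy S₁ ∧ A.IsQState S₁ q ∧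
        ∀ (Q : ℕ) (S₂ : A.Strategy), A.IsStrategy S₂ → A.IsChromaticQState S₂ Q →
          A.colSet S₂ u ⊆ A.colSet S₁ u → q ^ n ≤ Q := by
  have : NeZero n := ⟨by omega⟩
  have : NeZero q := ⟨by omega⟩
  refine ⟨Color n q, inferInstance, arena n q, card_node n, .u, strategy₁, isStrategy_strategy₁,
    isQState_strategy₁, fun Q S₂ hS₂ hchrom hsub => ?_⟩
  calc q ^ n = Fintype.card (Fin n → Fin q) := by simp
    _ ≤ Q := hchrom.card_le (v := .u) hist (fun w => .star :: List.ofFn fun j => .bcast j (w j))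
        (fun i => [.query i]) map_color_hist
        (fun w w' i => by rw [(pathFrom_hist w i).ptarget_eq, (pathFrom_hist w' i).ptarget_eq])
        fun w w' h => funext fun i => by
          simpa [eq_answer_of_colSet_subset hS₂ hsub] using h i
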